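/- arXiv:2412.03209 — 6 statements merged into one kernel-verified Lean document; each statement's English description precedes it below -/
import Mathlib

section
/- Let α ∈ (0,1), d_α = 1/Γ(1-α), and let g : ℝ → ℝ be continuously differentiable with g and g' bounded. Define D^α[g](z) = d_α ∫_{-∞}^{z} g'(y)/(z-y)^α dy. Then for every z ∈ ℝ, |D^α[g](z)| ≤ C_α (sup_{y ≤ z} |g(y)|)^{1-α} (sup_{y ≤ z} |g'(y)|)^α, where C_α = d_α · 2(2α)^{-α}/(1-α). -/
open Set MeasureTheory Filter Topology

private lemma aux_pre (z b : ℝ) : (fun y : ℝ => z - y) ⁻¹' (Ici (z - b)) = Iic b := by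
  ext y; simp only [mem_preimage, mem_Ici, mem_Iic]
  constructor <;> intro <;> linarith

private lemma aux_w2_int {α z b : ℝ} (hα : 0 < α) (hb : b < z) :
    IntegrableOn (fun y : ℝ => (z - y) ^ (-α - 1)) (Iic b) := by
  have h1 : IntegrableOn (fun t : ℝ => t ^ (-α - 1)) (Ici (z - b)) := by
    have := integrableOn_Ioi_rpow_of_lt (a := -α - 1) (by linarith)
      (half_pos (by linarith : (0:ℝ) < z - b))
    exact this.mono_set (fun x hx => lt_of_lt_of_le (by linarith : (z - b) / 2 < z - b) hx)
  have emb : MeasurableEmbedding (fun t : ℝ => z - t) :=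
    (MeasurableEquiv.subLeft z).measurableEmbedding
  have key := ((Measure.measurePreserving_sub_left volume z).integrableOn_comp_preimage emb
    (f := fun t : ℝ => t ^ (-α - 1)) (s := Ici (z - b))).mpr h1
  rwa [aux_pre] at key

private lemma aux_w2_val {α z b : ℝ} (hα : 0 < α) (hb : b < z) :
    ∫ y in Iic b, (z - y) ^ (-α - 1) = (z - b) ^ (-α) / α := by
  have emb : MeasurableEmbedding (fun t : ℝ => z - t) :=
    (MeasurableEquiv.subLeft z).measurableEmbedding
  have key := (Measure.measurePreserving_sub_left volume z).setIntegral_preimage_emb emb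
    (fun t : ℝ => t ^ (-α - 1)) (Ici (z - b))
  rw [aux_pre] at key
  rw [key, integral_Ici_eq_integral_Ioi,
    integral_Ioi_rpow_of_lt (by linarith) (by linarith : (0:ℝ) < z - b),
    show -α - 1 + 1 = -α by ring]
  field_simp

private lemma aux_w1_int {α z b : ℝ} (hα : 0 < α) (hα1 : α < 1) (hb : b < z) :
    IntegrableOn (fun y : ℝ => (z - y) ^ (-α)) (Ioo b z) := by
  have h1 : IntervalIntegrable (fun t : ℝ => t ^ (-α)) volume 0 (z - b) :=
    intervalIntegral.intervalIntegrable_rpow' (by linarith)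
  have h2 := (h1.comp_sub_left z).symm
  simp only [sub_zero, sub_sub_cancel] at h2
  rw [intervalIntegrable_iff_integrableOn_Ioc_of_le hb.le] at h2
  exact h2.mono_set Ioo_subset_Ioc_self

private lemma aux_w1_val {α z b : ℝ} (hα : 0 < α) (hα1 : α < 1) (hb : b < z) :
    ∫ y in Ioo b z, (z - y) ^ (-α) = (z - b) ^ (1 - α) / (1 - α) := by
  rw [← integral_Ioc_eq_integral_Ioo, ← intervalIntegral.integral_of_le hb.le,
    intervalIntegral.integral_comp_sub_left (fun t : ℝ => t ^ (-α)) z]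
  simp only [sub_self]
  rw [integral_rpow (Or.inl (by linarith))]
  rw [Real.zero_rpow (by linarith : -α + 1 ≠ 0), show -α + 1 = 1 - α by ring]
  ring

private lemma aux_ibp {α z b : ℝ} (hα : 0 < α) (hb : b < z)
    (g : ℝ → ℝ) (hg : ContDiff ℝ 1 g) (M : ℝ) (hM : ∀ x, |g x| ≤ M)
    (hint : IntegrableOn (fun y => deriv g y * (z - y) ^ (-α)) (Iic b)) :
    ∫ y in Iic b, deriv g y * (z - y) ^ (-α)
      = g b * (z - b) ^ (-α) - α * ∫ y in Iic b, g y * (z - y) ^ (-α - 1) := by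
  have hgc : Continuous g := hg.continuous
  have hder : ∀ x, HasDerivAt g (deriv g x) x :=
    fun x => (hg.differentiable one_ne_zero x).hasDerivAt
  have hM0 : 0 ≤ M := (abs_nonneg _).trans (hM 0)
  have hF : ∀ y ∈ Iic b, HasDerivAt (fun y => g y * (z - y) ^ (-α))
      (deriv g y * (z - y) ^ (-α) + g y * (α * (z - y) ^ (-α - 1))) y := by
    intro y hy
    have hzy : (0:ℝ) < z - y := by simp only [mem_Iic] at hy; linarith
    have h0 : HasDerivAt (fun y : ℝ => z - y) (-1) y := (hasDerivAt_id y).const_sub z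
    have h2 : HasDerivAt (fun t : ℝ => t ^ (-α)) (-α * (z - y) ^ (-α - 1)) (z - y) :=
      Real.hasDerivAt_rpow_const (Or.inl hzy.ne')
    have h1 : HasDerivAt (fun y : ℝ => (z - y) ^ (-α)) (α * (z - y) ^ (-α - 1)) y := by
      have := h2.comp y h0
      rw [show α * (z - y) ^ (-α - 1) = -α * (z - y) ^ (-α - 1) * -1 by ring]
      exact this
    exact (hder y).mul h1
  have h2int : IntegrableOn (fun y => g y * (α * (z - y) ^ (-α - 1))) (Iic b) := by
    exact Integrable.bdd_mul ((aux_w2_int hα hb).const_mul α)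
      hgc.aestronglyMeasurable.restrict (ae_of_all _ fun x => hM x)
  have htend : Tendsto (fun y => g y * (z - y) ^ (-α)) atBot (𝓝 0) := by
    have hz2 : Tendsto (fun y : ℝ => z - y) atBot atTop := by
      have := tendsto_atTop_add_const_left atBot z
        (tendsto_neg_atBot_atTop : Tendsto (fun x : ℝ => -x) atBot atTop)
      simpa only [← sub_eq_add_neg] using this
    have h3 : Tendsto (fun y : ℝ => (z - y) ^ (-α)) atBot (𝓝 0) :=
      (tendsto_rpow_neg_atTop hα).comp hz2
    have h4 : Tendsto (fun y : ℝ => M * (z - y) ^ (-α)) atBot (𝓝 0) := by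
      simpa using h3.const_mul M
    apply squeeze_zero_norm' _ h4
    filter_upwards [Iic_mem_atBot z] with y hy
    have hzy : (0:ℝ) ≤ z - y := by simp only [mem_Iic] at hy; linarith
    have hw : (0:ℝ) ≤ (z - y) ^ (-α) := Real.rpow_nonneg hzy _
    rw [Real.norm_eq_abs, abs_mul, abs_of_nonneg hw]
    exact mul_le_mul_of_nonneg_right (hM y) hw
  have IBP := integral_Iic_of_hasDerivAt_of_tendsto' hF (hint.add h2int) htend
  rw [integral_add hint h2int, sub_zero] at IBP
  have hc : ∫ y in Iic b, g y * (α * (z - y) ^ (-α - 1))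
      = α * ∫ y in Iic b, g y * (z - y) ^ (-α - 1) := by
    rw [← MeasureTheory.integral_const_mul]
    congr 1; funext y; ring
  rw [hc] at IBP
  linarith

/-- Boundedness of the non-local operator `D^α`:
`|D^α[g](z)| ≤ C_α (sup_{y≤z}|g|)^{1-α} (sup_{y≤z}|g'|)^α`. -/
theorem stmt0 (α : ℝ) (hα : α ∈ Set.Ioo (0:ℝ) 1)
    (g : ℝ → ℝ) (hg : ContDiff ℝ 1 g)
    (hgb : ∃ M, ∀ x, |g x| ≤ M) (hgb' : ∃ M, ∀ x, |deriv g x| ≤ M)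
    (dα Cα : ℝ) (hd : dα = 1 / Real.Gamma (1 - α))
    (hC : Cα = dα * (2 * (2 * α) ^ (-α)) / (1 - α)) :
    ∀ z : ℝ,
      |dα * ∫ y in Set.Iio z, deriv g y / (z - y) ^ α| ≤
        Cα * (⨆ y : Set.Iic z, |g (y : ℝ)|) ^ (1 - α) *
          (⨆ y : Set.Iic z, |deriv g (y : ℝ)|) ^ α := by
  obtain ⟨hα0, hα1⟩ := hα
  obtain ⟨M, hM⟩ := hgb
  obtain ⟨M', hM'⟩ := hgb'
  intro z
  have hgc : Continuous g := hg.continuous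
  set A := (⨆ y : Set.Iic z, |g (y : ℝ)|) with hAdef
  set B := (⨆ y : Set.Iic z, |deriv g (y : ℝ)|) with hBdef
  have hAle : ∀ y, y ≤ z → |g y| ≤ A := by
    intro y hy
    exact le_ciSup (f := fun y : Set.Iic z => |g (y : ℝ)|)
      ⟨M, by rintro x ⟨y, rfl⟩; exact hM _⟩ ⟨y, hy⟩
  have hBle : ∀ y, y ≤ z → |deriv g y| ≤ B := by
    intro y hy
    exact le_ciSup (f := fun y : Set.Iic z => |deriv g (y : ℝ)|)
      ⟨M', by rintro x ⟨y, rfl⟩; exact hM' _⟩ ⟨y, hy⟩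
  have hA0 : 0 ≤ A := le_trans (abs_nonneg _) (hAle z le_rfl)
  have hB0 : 0 ≤ B := le_trans (abs_nonneg _) (hBle z le_rfl)
  have hd0 : 0 < dα := by
    rw [hd]; exact one_div_pos.mpr (Real.Gamma_pos_of_pos (by linarith))
  have hP0 : (0:ℝ) < (2 * α) ^ (-α) := Real.rpow_pos_of_pos (by linarith) _
  have hC0 : 0 ≤ Cα := by
    rw [hC]
    apply div_nonneg _ (by linarith)
    exact mul_nonneg hd0.le (by positivity)
  have hR0 : 0 ≤ Cα * A ^ (1 - α) * B ^ α :=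
    mul_nonneg (mul_nonneg hC0 (Real.rpow_nonneg hA0 _)) (Real.rpow_nonneg hB0 _)
  by_cases hint : IntegrableOn (fun y => deriv g y / (z - y) ^ α) (Iio z) volume
  swap
  · rw [integral_undef hint, mul_zero, abs_zero]; exact hR0
  rcases eq_or_lt_of_le hA0 with hA0' | hApos
  · have hz0 : ∀ y ∈ Iio z, deriv g y / (z - y) ^ α = (0:ℝ) := by
      intro y hy
      have hg0 : ∀ x ∈ Iio z, g x = 0 := by
        intro x hx
        have h1 : |g x| ≤ 0 := hA0' ▸ hAle x hx.le
        exact abs_eq_zero.mp (le_antisymm h1 (abs_nonneg _))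
      have hev : g =ᶠ[𝓝 y] fun _ => 0 := by
        filter_upwards [Iio_mem_nhds (hy : y < z)] with x hx using hg0 x hx
      rw [hev.deriv_eq]; simp
    rw [setIntegral_congr_fun measurableSet_Iio hz0, integral_zero, mul_zero, abs_zero]
    exact hR0
  rcases eq_or_lt_of_le hB0 with hB0' | hBpos
  · have hz0 : ∀ y ∈ Iio z, deriv g y / (z - y) ^ α = (0:ℝ) := by
      intro y hy
      have h1 : |deriv g y| ≤ 0 := hB0' ▸ hBle y (le_of_lt hy)
      have : deriv g y = 0 := abs_eq_zero.mp (le_antisymm h1 (abs_nonneg _))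
      simp [this]
    rw [setIntegral_congr_fun measurableSet_Iio hz0, integral_zero, mul_zero, abs_zero]
    exact hR0
  -- main case
  set δ := 2 * α * A / B with hδdef
  have hδ : 0 < δ := div_pos (mul_pos (mul_pos two_pos hα0) hApos) hBpos
  set b := z - δ with hbdef
  have hbz : b < z := sub_lt_self z hδ
  have hzb : z - b = δ := by rw [hbdef]; ring
  have hform : ∀ y, y < z → deriv g y / (z - y) ^ α = deriv g y * (z - y) ^ (-α) := by
    intro y hy
    rw [Real.rpow_neg (by linarith : (0:ℝ) ≤ z - y), div_eq_mul_inv]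
  have hsub1 : Iic b ⊆ Iio z := fun x hx => lt_of_le_of_lt hx hbz
  have hint_far : IntegrableOn (fun y => deriv g y * (z - y) ^ (-α)) (Iic b) :=
    (hint.mono_set hsub1).congr_fun
      (fun y hy => hform y (lt_of_le_of_lt hy hbz)) measurableSet_Iic
  have hint_near : IntegrableOn (fun y => deriv g y / (z - y) ^ α) (Ioo b z) :=
    hint.mono_set (fun x hx => hx.2)
  have hsplit : ∫ y in Iio z, deriv g y / (z - y) ^ α
      = (∫ y in Iic b, deriv g y / (z - y) ^ α)
        + ∫ y in Ioo b z, deriv g y / (z - y) ^ α := by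
    rw [← Iic_union_Ioo_eq_Iio hbz]
    exact setIntegral_union
      (by rw [Set.disjoint_left]; rintro x hx ⟨h1, _⟩; exact absurd hx (not_le.mpr h1))
      measurableSet_Ioo (hint.mono_set hsub1) hint_near
  have e1 : ∫ y in Iic b, deriv g y / (z - y) ^ α
      = ∫ y in Iic b, deriv g y * (z - y) ^ (-α) :=
    setIntegral_congr_fun measurableSet_Iic (fun y hy => hform y (lt_of_le_of_lt hy hbz))
  have hibp := aux_ibp hα0 hbz g hg M hM hint_far
  have habs2 : |∫ y in Iic b, g y * (z - y) ^ (-α - 1)| ≤ A * (δ ^ (-α) / α) := by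
    have hGint : IntegrableOn (fun y => g y * (z - y) ^ (-α - 1)) (Iic b) :=
      Integrable.bdd_mul (aux_w2_int hα0 hbz) hgc.aestronglyMeasurable.restrict (ae_of_all _ fun x => hM x)
    have h1 := norm_integral_le_integral_norm
      (μ := volume.restrict (Iic b)) (fun y => g y * (z - y) ^ (-α - 1))
    simp only [Real.norm_eq_abs] at h1
    refine h1.trans ?_
    have h2 : ∫ y in Iic b, |g y * (z - y) ^ (-α - 1)|
        ≤ ∫ y in Iic b, A * (z - y) ^ (-α - 1) := by
      refine setIntegral_mono_on hGint.abs ((aux_w2_int hα0 hbz).const_mul A)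
        measurableSet_Iic ?_
      intro y hy
      have hzy : (0:ℝ) ≤ z - y := by
        simp only [mem_Iic] at hy; linarith
      have hw : (0:ℝ) ≤ (z - y) ^ (-α - 1) := Real.rpow_nonneg hzy _
      rw [abs_mul, abs_of_nonneg hw]
      exact mul_le_mul_of_nonneg_right (hAle y (by simp only [mem_Iic] at hy; linarith)) hw
    refine h2.trans ?_
    rw [MeasureTheory.integral_const_mul, aux_w2_val hα0 hbz, hzb]
  have hfar : |∫ y in Iic b, deriv g y / (z - y) ^ α| ≤ 2 * A * δ ^ (-α) := by
    rw [e1, hibp]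
    have h1 : |g b * (z - b) ^ (-α)| ≤ A * δ ^ (-α) := by
      rw [hzb, abs_mul, abs_of_nonneg (Real.rpow_nonneg hδ.le _)]
      exact mul_le_mul_of_nonneg_right (hAle b hbz.le) (Real.rpow_nonneg hδ.le _)
    have h2 : |α * ∫ y in Iic b, g y * (z - y) ^ (-α - 1)| ≤ α * (A * (δ ^ (-α) / α)) := by
      rw [abs_mul, abs_of_pos hα0]
      exact mul_le_mul_of_nonneg_left habs2 hα0.le
    have h3 := (abs_sub _ _).trans (add_le_add h1 h2)
    refine h3.trans (le_of_eq ?_)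
    field_simp
    ring
  have hnear : |∫ y in Ioo b z, deriv g y / (z - y) ^ α| ≤ B * (δ ^ (1 - α) / (1 - α)) := by
    have h1 := norm_integral_le_integral_norm
      (μ := volume.restrict (Ioo b z)) (fun y => deriv g y / (z - y) ^ α)
    simp only [Real.norm_eq_abs] at h1
    refine h1.trans ?_
    have h2 : ∫ y in Ioo b z, |deriv g y / (z - y) ^ α|
        ≤ ∫ y in Ioo b z, B * (z - y) ^ (-α) := by
      refine setIntegral_mono_on hint_near.abs ((aux_w1_int hα0 hα1 hbz).const_mul B)
        measurableSet_Ioo ?_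
      intro y hy
      have hzy : (0:ℝ) ≤ z - y := by linarith [hy.2]
      have hw : (0:ℝ) ≤ (z - y) ^ (-α) := Real.rpow_nonneg hzy _
      rw [hform y hy.2, abs_mul, abs_of_nonneg hw]
      exact mul_le_mul_of_nonneg_right (hBle y hy.2.le) hw
    refine h2.trans (le_of_eq ?_)
    rw [MeasureTheory.integral_const_mul, aux_w1_val hα0 hα1 hbz, hzb]
  have hI : |∫ y in Iio z, deriv g y / (z - y) ^ α|
      ≤ 2 * A * δ ^ (-α) + B * (δ ^ (1 - α) / (1 - α)) := by
    rw [hsplit]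
    exact (abs_add_le _ _).trans (add_le_add hfar hnear)
  have e2 : δ ^ (-α) = (2 * α) ^ (-α) * (A ^ (-α) * B ^ α) := by
    rw [hδdef, Real.div_rpow (by positivity) hB0,
      Real.mul_rpow (by positivity) hA0, Real.rpow_neg hB0, div_eq_mul_inv, inv_inv]
    ring
  have eA : A * A ^ (-α) = A ^ (1 - α) := by
    rw [show A * A ^ (-α) = A ^ (1:ℝ) * A ^ (-α) by rw [Real.rpow_one],
      ← Real.rpow_add hApos]
    congr 1
  have hδ1 : δ ^ (1 - α) = δ * δ ^ (-α) := by
    rw [show (1 - α : ℝ) = 1 + -α by ring, Real.rpow_add hδ, Real.rpow_one]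
  have key : 2 * A * δ ^ (-α) + B * (δ ^ (1 - α) / (1 - α))
      = (2 * (2 * α) ^ (-α)) / (1 - α) * (A ^ (1 - α) * B ^ α) := by
    rw [hδ1, e2, ← eA, hδdef]
    have h1α : (1 - α : ℝ) ≠ 0 := by linarith
    field_simp
    ring
  rw [abs_mul, abs_of_pos hd0]
  calc dα * |∫ y in Iio z, deriv g y / (z - y) ^ α|
      ≤ dα * (2 * A * δ ^ (-α) + B * (δ ^ (1 - α) / (1 - α))) :=
        mul_le_mul_of_nonneg_left hI hd0.le
    _ = Cα * A ^ (1 - α) * B ^ α := by rw [key, hC]; ring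
end

section
/- Let α ∈ (0,1), x ∈ ℝ, M > 0, and g : (-∞,x] → ℝ be C^1 with g and g' bounded. Then for any z ≤ x, |d_α ∫_0^∞ g'(z-s) s^{-α} ds| ≤ d_α ( A' M^{1-α}/(1-α) + 2 A M^{-α} ), where A = sup_{y ≤ z}|g(y)| and A' = sup_{y ≤ z}|g'(y)|, and the right-hand side is minimized over M > 0 at M = 2αA/A'. -/
open Set MeasureTheory
open Filter Topology

/-- Splitting estimate for the fractional derivative and optimality of the
splitting point `M = 2αA/A'`. -/
theorem stmt1 (α : ℝ) (hα : α ∈ Set.Ioo (0:ℝ) 1)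
    (dα : ℝ) (hd : dα = 1 / Real.Gamma (1 - α))
    (x : ℝ) (g : ℝ → ℝ)
    (hg : ContDiffOn ℝ 1 g (Set.Iic x))
    (hgb : ∃ K, ∀ y ≤ x, |g y| ≤ K) (hgb' : ∃ K, ∀ y ≤ x, |deriv g y| ≤ K)
    (z : ℝ) (hz : z ≤ x)
    (A A' : ℝ) (hA : A = ⨆ y : Set.Iic z, |g (y : ℝ)|)
    (hA' : A' = ⨆ y : Set.Iic z, |deriv g (y : ℝ)|) :
    (∀ M : ℝ, 0 < M →
      |dα * ∫ s in Set.Ioi (0:ℝ), deriv g (z - s) * s ^ (-α)| ≤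
        dα * (A' * M ^ (1 - α) / (1 - α) + 2 * A * M ^ (-α))) ∧
    (0 < A → 0 < A' → ∀ M : ℝ, 0 < M →
      dα * (A' * (2 * α * A / A') ^ (1 - α) / (1 - α)
              + 2 * A * (2 * α * A / A') ^ (-α)) ≤
        dα * (A' * M ^ (1 - α) / (1 - α) + 2 * A * M ^ (-α))) := by
  obtain ⟨hα0, hα1⟩ := hα
  have h1α : 0 < 1 - α := by linarith
  have hdα : 0 < dα := by
    rw [hd]
    exact div_pos one_pos (Real.Gamma_pos_of_pos h1α)
  obtain ⟨K, hK⟩ := hgb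
  obtain ⟨K', hK'⟩ := hgb'
  have hAle : ∀ y ≤ z, |g y| ≤ A := by
    intro y hy
    rw [hA]
    exact le_ciSup (f := fun y : Iic z => |g (y:ℝ)|)
      ⟨K, by rintro v ⟨⟨w, hw⟩, rfl⟩; exact hK w (le_trans hw hz)⟩ (⟨y, hy⟩ : Iic z)
  have hA'le : ∀ y ≤ z, |deriv g y| ≤ A' := by
    intro y hy
    rw [hA']
    exact le_ciSup (f := fun y : Iic z => |deriv g (y:ℝ)|)
      ⟨K', by rintro v ⟨⟨w, hw⟩, rfl⟩; exact hK' w (le_trans hw hz)⟩ (⟨y, hy⟩ : Iic z)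
  have hA0 : 0 ≤ A := (abs_nonneg _).trans (hAle z le_rfl)
  have hA'0 : 0 ≤ A' := (abs_nonneg _).trans (hA'le z le_rfl)
  constructor
  · -- main estimate
    intro M hM
    set f : ℝ → ℝ := fun s => deriv g (z - s) * s ^ (-α) with hf
    by_cases hi : IntegrableOn f (Ioi (0:ℝ)) volume
    · have hIoc : IntegrableOn f (Ioc 0 M) volume :=
        hi.mono_set Ioc_subset_Ioi_self
      have hIoiM : IntegrableOn f (Ioi M) volume :=
        hi.mono_set (Ioi_subset_Ioi hM.le)
      have hsplit : ∫ s in Ioi (0:ℝ), f s = (∫ s in Ioc 0 M, f s) + ∫ s in Ioi M, f s := by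
        rw [← setIntegral_union (Ioc_disjoint_Ioi le_rfl) measurableSet_Ioi hIoc hIoiM,
          Ioc_union_Ioi_eq_Ioi hM.le]
      -- bound on (0, M]
      have hintb : IntegrableOn (fun s => A' * s ^ (-α)) (Ioc 0 M) volume :=
        ((intervalIntegral.intervalIntegrable_rpow' (by linarith : (-1:ℝ) < -α)).1).const_mul A'
      have hcomp : ∫ s in Ioc (0:ℝ) M, s ^ (-α) = M ^ (1 - α) / (1 - α) := by
        rw [← intervalIntegral.integral_of_le hM.le,
          integral_rpow (Or.inl (by linarith : (-1:ℝ) < -α)),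
          Real.zero_rpow (by linarith : -α + 1 ≠ 0)]
        rw [show -α + 1 = 1 - α by ring, sub_zero]
      have hb1 : |∫ s in Ioc (0:ℝ) M, f s| ≤ A' * M ^ (1 - α) / (1 - α) := by
        calc |∫ s in Ioc (0:ℝ) M, f s| ≤ ∫ s in Ioc (0:ℝ) M, |f s| := by
              simpa only [Real.norm_eq_abs] using norm_integral_le_integral_norm (μ := volume.restrict (Ioc 0 M)) f
          _ ≤ ∫ s in Ioc (0:ℝ) M, A' * s ^ (-α) := by
              apply setIntegral_mono_on hIoc.abs hintb measurableSet_Ioc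
              intro s hs
              rw [hf, abs_mul, abs_of_nonneg (Real.rpow_nonneg hs.1.le _)]
              exact mul_le_mul_of_nonneg_right (hA'le _ (by linarith [hs.1]))
                (Real.rpow_nonneg hs.1.le _)
          _ = A' * ∫ s in Ioc (0:ℝ) M, s ^ (-α) := integral_const_mul A' _
          _ = A' * M ^ (1 - α) / (1 - α) := by rw [hcomp]; ring
      -- bound on (M, ∞)
      have key2 : ∀ T, M ≤ T → |∫ s in M..T, f s| ≤ 2 * A * M ^ (-α) := by
        intro T hT
        have hTpos : 0 < T := lt_of_lt_of_le hM hT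
        have huIcc : uIcc M T = Icc M T := uIcc_of_le hT
        have hMT : ∀ s ∈ uIcc M T, 0 < s := by
          intro s hs; rw [huIcc] at hs; exact lt_of_lt_of_le hM hs.1
        have hu : ∀ s ∈ uIcc M T, HasDerivAt (fun y : ℝ => y ^ (-α))
            (-α * s ^ (-α - 1)) s := fun s hs =>
          Real.hasDerivAt_rpow_const (Or.inl (hMT s hs).ne')
        have hgc : ∀ s : ℝ, 0 < s → ContinuousAt (fun y => g (z - y)) s := by
          intro s hs
          have hzs : z - s < x := by linarith
          have h1 : ContinuousWithinAt g (Iic x) (z - s) :=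
            (hg.continuousOn) _ hzs.le
          have h2 : ContinuousAt g (z - s) := h1.continuousAt (Iic_mem_nhds hzs)
          exact h2.comp ((continuous_const.sub continuous_id).continuousAt)
        have hv : ∀ s ∈ uIcc M T, HasDerivAt (fun y => -g (z - y)) (deriv g (z - s)) s := by
          intro s hs
          have hs0 := hMT s hs
          have hzs : z - s < x := by linarith
          have hdiff : DifferentiableAt ℝ g (z - s) :=
            ((hg.differentiableOn one_ne_zero) _ hzs.le).differentiableAt (Iic_mem_nhds hzs)
          have h2 : HasDerivAt (fun y : ℝ => z - y) (-1) s := by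
            simpa using (hasDerivAt_id s).const_sub z
          have h3 := (hdiff.hasDerivAt.comp s h2).neg
          simpa [Function.comp_def, Pi.neg_def] using h3
        have hu' : IntervalIntegrable (fun s => -α * s ^ (-α - 1)) volume M T := by
          apply ContinuousOn.intervalIntegrable
          intro s hs
          exact ((Real.continuousAt_rpow_const s _ (Or.inl (hMT s hs).ne')).continuousWithinAt).const_smul (-α)
        have hv' : IntervalIntegrable (fun s => deriv g (z - s)) volume M T := by
          rw [intervalIntegrable_iff_integrableOn_Ioc_of_le hT]
          apply Measure.integrableOn_of_bounded (M := A') measure_Ioc_lt_top.ne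
          · exact ((measurable_deriv g).comp (measurable_const.sub measurable_id)).aestronglyMeasurable
          · filter_upwards [ae_restrict_mem measurableSet_Ioc] with s hs
            rw [Real.norm_eq_abs]
            exact hA'le _ (by linarith [hM.trans hs.1])
        have hibp := intervalIntegral.integral_mul_deriv_eq_deriv_mul hu hv hu' hv'
        have hfeq : ∫ s in M..T, f s
            = ∫ s in M..T, (fun y : ℝ => y ^ (-α)) s * deriv g (z - s) := by
          apply intervalIntegral.integral_congr
          intro s _; exact mul_comm _ _
        -- inner integral bound
        have hconti : ContinuousOn (fun s => g (z - s) * s ^ (-α - 1)) (Icc M T) := by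
          intro s hs
          have hs0 : 0 < s := lt_of_lt_of_le hM hs.1
          exact ((hgc s hs0).continuousWithinAt).mul
            ((Real.continuousAt_rpow_const s _ (Or.inl hs0.ne')).continuousWithinAt)
        have hginteg : IntegrableOn (fun s => g (z - s) * s ^ (-α - 1)) (Ioc M T) volume :=
          (hconti.integrableOn_Icc).mono_set Ioc_subset_Icc_self
        have hrinteg : IntegrableOn (fun s => A * s ^ (-α - 1)) (Ioc M T) volume := by
          have hc : ContinuousOn (fun s : ℝ => A * s ^ (-α - 1)) (Icc M T) := by
            intro s hs
            have hs0 : 0 < s := lt_of_lt_of_le hM hs.1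
            exact ((Real.continuousAt_rpow_const s _ (Or.inl hs0.ne')).continuousWithinAt).const_smul A
          exact (hc.integrableOn_Icc).mono_set Ioc_subset_Icc_self
        have hrcomp : ∫ s in Ioc M T, s ^ (-α - 1) = (M ^ (-α) - T ^ (-α)) / α := by
          rw [← intervalIntegral.integral_of_le hT,
            integral_rpow (Or.inr ⟨fun h => hα0.ne' (by linarith), by
              rw [uIcc_of_le hT]; rintro ⟨h1, h2⟩; linarith⟩)]
          rw [show -α - 1 + 1 = -α by ring]
          rw [div_eq_div_iff (by linarith : (-α) ≠ 0) hα0.ne']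
          ring
        have hinner : |∫ s in M..T, g (z - s) * s ^ (-α - 1)|
            ≤ A * ((M ^ (-α) - T ^ (-α)) / α) := by
          rw [intervalIntegral.integral_of_le hT]
          calc |∫ s in Ioc M T, g (z - s) * s ^ (-α - 1)|
              ≤ ∫ s in Ioc M T, |g (z - s) * s ^ (-α - 1)| := by
                simpa only [Real.norm_eq_abs] using norm_integral_le_integral_norm
                  (μ := volume.restrict (Ioc M T)) (fun s => g (z - s) * s ^ (-α - 1))
            _ ≤ ∫ s in Ioc M T, A * s ^ (-α - 1) := by
                apply setIntegral_mono_on hginteg.abs hrinteg measurableSet_Ioc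
                intro s hs
                have hs0 : 0 < s := hM.trans hs.1
                rw [abs_mul, abs_of_nonneg (Real.rpow_nonneg hs0.le _)]
                exact mul_le_mul_of_nonneg_right (hAle _ (by linarith))
                  (Real.rpow_nonneg hs0.le _)
            _ = A * ((M ^ (-α) - T ^ (-α)) / α) := by rw [integral_const_mul, hrcomp]
        have hlast : ∫ s in M..T, (-α * s ^ (-α - 1)) * (-g (z - s))
            = α * ∫ s in M..T, g (z - s) * s ^ (-α - 1) := by
          rw [← intervalIntegral.integral_const_mul]
          apply intervalIntegral.integral_congr
          intro s _; ring
        have h5 : |α * ∫ s in M..T, g (z - s) * s ^ (-α - 1)|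
            ≤ A * (M ^ (-α) - T ^ (-α)) := by
          rw [abs_mul, abs_of_nonneg hα0.le]
          calc α * |∫ s in M..T, g (z - s) * s ^ (-α - 1)|
              ≤ α * (A * ((M ^ (-α) - T ^ (-α)) / α)) :=
                mul_le_mul_of_nonneg_left hinner hα0.le
            _ = A * (M ^ (-α) - T ^ (-α)) := by field_simp
        have e1 : |T ^ (-α) * (-g (z - T))| ≤ A * T ^ (-α) := by
          rw [abs_mul, abs_neg, abs_of_nonneg (Real.rpow_nonneg hTpos.le _), mul_comm]
          exact mul_le_mul_of_nonneg_right (hAle _ (by linarith))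
            (Real.rpow_nonneg hTpos.le _)
        have e2 : |M ^ (-α) * (-g (z - M))| ≤ A * M ^ (-α) := by
          rw [abs_mul, abs_neg, abs_of_nonneg (Real.rpow_nonneg hM.le _), mul_comm]
          exact mul_le_mul_of_nonneg_right (hAle _ (by linarith))
            (Real.rpow_nonneg hM.le _)
        rw [hfeq, hibp]
        rw [hlast]
        calc |T ^ (-α) * (-g (z - T)) - M ^ (-α) * (-g (z - M))
              - α * ∫ s in M..T, g (z - s) * s ^ (-α - 1)|
            ≤ |T ^ (-α) * (-g (z - T)) - M ^ (-α) * (-g (z - M))|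
              + |α * ∫ s in M..T, g (z - s) * s ^ (-α - 1)| := abs_sub _ _
          _ ≤ (|T ^ (-α) * (-g (z - T))| + |M ^ (-α) * (-g (z - M))|)
              + |α * ∫ s in M..T, g (z - s) * s ^ (-α - 1)| := by
              gcongr
              exact abs_sub _ _
          _ ≤ (A * T ^ (-α) + A * M ^ (-α)) + A * (M ^ (-α) - T ^ (-α)) :=
              add_le_add (add_le_add e1 e2) h5
          _ = 2 * A * M ^ (-α) := by ring
      have hlim : Tendsto (fun T => ∫ s in M..T, f s) atTop (𝓝 (∫ s in Ioi M, f s)) :=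
        intervalIntegral_tendsto_integral_Ioi M hIoiM tendsto_id
      have hb2 : |∫ s in Ioi M, f s| ≤ 2 * A * M ^ (-α) :=
        le_of_tendsto hlim.abs (eventually_atTop.2 ⟨M, key2⟩)
      rw [abs_mul, abs_of_nonneg hdα.le]
      apply mul_le_mul_of_nonneg_left _ hdα.le
      rw [hsplit]
      calc |(∫ s in Ioc (0:ℝ) M, f s) + ∫ s in Ioi M, f s|
          ≤ |∫ s in Ioc (0:ℝ) M, f s| + |∫ s in Ioi M, f s| := abs_add_le _ _
        _ ≤ A' * M ^ (1 - α) / (1 - α) + 2 * A * M ^ (-α) := add_le_add hb1 hb2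
    · rw [integral_undef hi, mul_zero, abs_zero]
      apply mul_nonneg hdα.le
      apply add_nonneg
      · exact div_nonneg (mul_nonneg hA'0 (Real.rpow_nonneg hM.le _)) h1α.le
      · exact mul_nonneg (by linarith) (Real.rpow_nonneg hM.le _)
  · -- optimality
    intro hApos hA'pos M hM
    apply mul_le_mul_of_nonneg_left _ hdα.le
    set M₀ : ℝ := 2 * α * A / A' with hM₀
    have hM₀pos : 0 < M₀ := by positivity
    set r : ℝ := M / M₀ with hr
    have hrpos : 0 < r := by positivity
    have hMr : M = r * M₀ := by rw [hr]; field_simp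
    have hA'M₀ : A' * M₀ = 2 * α * A := by rw [hM₀]; field_simp
    have hM₀split : M₀ ^ (1 - α) = M₀ * M₀ ^ (-α) := by
      rw [show (1:ℝ) - α = 1 + -α by ring, Real.rpow_add hM₀pos, Real.rpow_one]
    have gm : (1:ℝ) ≤ α * r ^ (1 - α) + (1 - α) * r ^ (-α) := by
      have h := Real.geom_mean_le_arith_mean2_weighted hα0.le h1α.le
        (Real.rpow_nonneg hrpos.le (1 - α)) (Real.rpow_nonneg hrpos.le (-α)) (by ring)
      calc (1:ℝ) = (r ^ (1 - α)) ^ α * (r ^ (-α)) ^ (1 - α) := by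
            rw [← Real.rpow_mul hrpos.le, ← Real.rpow_mul hrpos.le,
              ← Real.rpow_add hrpos]
            rw [show (1 - α) * α + -α * (1 - α) = 0 by ring, Real.rpow_zero]
        _ ≤ α * r ^ (1 - α) + (1 - α) * r ^ (-α) := h
    have hRHS : A' * M ^ (1 - α) / (1 - α) + 2 * A * M ^ (-α)
        = (2 * A * M₀ ^ (-α) / (1 - α)) * (α * r ^ (1 - α) + (1 - α) * r ^ (-α)) := by
      rw [hMr, Real.mul_rpow hrpos.le hM₀pos.le, Real.mul_rpow hrpos.le hM₀pos.le,
        hM₀split]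
      rw [div_add' _ _ _ h1α.ne', div_mul_eq_mul_div (2 * A * M₀ ^ (-α)), div_left_inj' h1α.ne']
      linear_combination (r ^ (1 - α) * M₀ ^ (-α)) * hA'M₀
    have hLHS : A' * M₀ ^ (1 - α) / (1 - α) + 2 * A * M₀ ^ (-α)
        = 2 * A * M₀ ^ (-α) / (1 - α) := by
      rw [hM₀split]
      rw [div_add' _ _ _ h1α.ne', div_left_inj' h1α.ne']
      linear_combination M₀ ^ (-α) * hA'M₀
    rw [hLHS, hRHS]
    nth_rewrite 1 [← mul_one (2 * A * M₀ ^ (-α) / (1 - α))]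
    apply mul_le_mul_of_nonneg_left gm
    positivity
end

section
/- Fix τ > 0, a > 0, α ∈ (0,1). Consider the function P(z) = τ z² + z^α - a on the principal branch of z^α (−π < arg z < π). Then P has exactly one positive real root, and its other two roots on this branch are a pair of complex conjugates with strictly negative real part. -/
open Complex Real

open Set Filter Topology in
lemma sin_neg_of_gt_pi {x : ℝ} (h1 : π < x) (h2 : x < 2*π) : Real.sin x < 0 := by
  have h := Real.sin_pos_of_pos_of_lt_pi (x := x - π) (by linarith) (by linarith)
  rw [Real.sin_sub] at h
  simp at h
  linarith

open Set Filter Topology in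
lemma signs {α θ : ℝ} (hα0 : 0 < α) (hα1 : α < 1) (hθ : θ ∈ Set.Ioo (π/(2-α)) π) :
    0 < Real.sin (α*θ) ∧ Real.sin ((2-α)*θ) < 0 ∧ Real.sin (2*θ) < 0 := by
  obtain ⟨hθ1, hθ2⟩ := hθ
  have hπ : 0 < π := Real.pi_pos
  have h2a : (0:ℝ) < 2-α := by linarith
  have hθpos : 0 < θ := lt_trans (div_pos hπ h2a) hθ1
  have hb : π < (2-α)*θ := by
    have := (div_lt_iff₀ (by linarith : (0:ℝ) < 2 - α)).1 hθ1
    linarith [this]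
  refine ⟨?_, ?_, ?_⟩
  · exact Real.sin_pos_of_pos_of_lt_pi (by positivity) (by nlinarith)
  · exact sin_neg_of_gt_pi hb (by nlinarith)
  · refine sin_neg_of_gt_pi ?_ (by nlinarith)
    nlinarith

noncomputable def Lfun (α : ℝ) : ℝ → ℝ := fun θ =>
  α * Real.log (Real.sin (α*θ)) + (2-α) * Real.log (-Real.sin ((2-α)*θ))
    - 2 * Real.log (-Real.sin (2*θ))

lemma Lcont {α : ℝ} (hα0 : 0 < α) (hα1 : α < 1) :
    ContinuousOn (Lfun α) (Set.Ioo (π/(2-α)) π) := by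
  intro θ hθ
  obtain ⟨hs1, hs2, hs3⟩ := signs hα0 hα1 hθ
  apply ContinuousAt.continuousWithinAt
  have c1 : ContinuousAt (fun t : ℝ => Real.log (Real.sin (α*t))) θ :=
    ContinuousAt.log (by fun_prop) hs1.ne'
  have c2 : ContinuousAt (fun t : ℝ => Real.log (-Real.sin ((2-α)*t))) θ :=
    ContinuousAt.log (by fun_prop) (by linarith : -Real.sin ((2-α)*θ) ≠ 0)
  have c3 : ContinuousAt (fun t : ℝ => Real.log (-Real.sin (2*t))) θ :=
    ContinuousAt.log (by fun_prop) (by linarith : -Real.sin (2*θ) ≠ 0)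
  exact ((c1.const_mul α).add (c2.const_mul (2-α))).sub (c3.const_mul 2)

open Set Filter Topology in
lemma cot_ineq (α p q : ℝ) (hp : 0 < Real.sin p) (hq : 0 < Real.sin q)
    (hpq : 0 < Real.sin (p+q)) :
    4 * Real.cos (p+q) / Real.sin (p+q)
      < α^2 * Real.cos p / Real.sin p + (2-α)^2 * Real.cos q / Real.sin q := by
  rw [div_add_div _ _ hp.ne' hq.ne', div_lt_div_iff₀ hpq (mul_pos hp hq)]
  rw [Real.sin_add, Real.cos_add]
  nlinarith [sq_nonneg (α*Real.cos p*Real.sin q - (2-α)*Real.sin p*Real.cos q),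
    mul_pos (mul_pos hp hq) (mul_pos hp hq)]

open Set Filter Topology in
lemma Lderiv {α θ : ℝ} (hα0 : 0 < α) (hα1 : α < 1) (hθ : θ ∈ Set.Ioo (π/(2-α)) π) :
    HasDerivAt (Lfun α)
      (α^2 * Real.cos (α*θ) / Real.sin (α*θ)
        + (2-α)^2 * Real.cos ((2-α)*θ) / Real.sin ((2-α)*θ)
        - 4 * Real.cos (2*θ) / Real.sin (2*θ)) θ := by
  obtain ⟨hs1, hs2, hs3⟩ := signs hα0 hα1 hθ
  have h1 : HasDerivAt (fun t : ℝ => Real.sin (α*t)) (Real.cos (α*θ) * α) θ := by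
    exact ((Real.hasDerivAt_sin (α*θ)).comp θ ((hasDerivAt_id θ).const_mul α)).congr_deriv (by ring)
  have h2 : HasDerivAt (fun t : ℝ => -Real.sin ((2-α)*t)) (-(Real.cos ((2-α)*θ) * (2-α))) θ := by
    exact ((Real.hasDerivAt_sin ((2-α)*θ)).comp θ ((hasDerivAt_id θ).const_mul (2-α))).neg.congr_deriv (by ring)
  have h3 : HasDerivAt (fun t : ℝ => -Real.sin (2*t)) (-(Real.cos (2*θ) * 2)) θ := by
    exact ((Real.hasDerivAt_sin (2*θ)).comp θ ((hasDerivAt_id θ).const_mul 2)).neg.congr_deriv (by ring)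
  have g1 := ((Real.hasDerivAt_log hs1.ne').comp θ h1).const_mul α
  have g2 := ((Real.hasDerivAt_log (by linarith : -Real.sin ((2-α)*θ) ≠ 0)).comp θ h2).const_mul (2-α)
  have g3 := ((Real.hasDerivAt_log (by linarith : -Real.sin (2*θ) ≠ 0)).comp θ h3).const_mul 2
  have := (g1.add g2).sub g3
  refine this.congr_deriv ?_
  simp only [div_eq_mul_inv]
  ring

open Set Filter Topology in
lemma Lderiv_pos {α θ : ℝ} (hα0 : 0 < α) (hα1 : α < 1) (hθ : θ ∈ Set.Ioo (π/(2-α)) π) :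
    0 < α^2 * Real.cos (α*θ) / Real.sin (α*θ)
        + (2-α)^2 * Real.cos ((2-α)*θ) / Real.sin ((2-α)*θ)
        - 4 * Real.cos (2*θ) / Real.sin (2*θ) := by
  obtain ⟨hs1, hs2, hs3⟩ := signs hα0 hα1 hθ
  set p := α*θ with hpdef
  set q := (2-α)*θ - π with hqdef
  have e2 : (2-α)*θ = q + π := by ring
  have e3 : 2*θ = (p + q) + π := by rw [hpdef, hqdef]; ring
  have hq : 0 < Real.sin q := by
    rw [e2, Real.sin_add_pi] at hs2; linarith
  have hpq : 0 < Real.sin (p+q) := by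
    rw [e3, Real.sin_add_pi] at hs3; linarith
  rw [e2, e3, Real.sin_add_pi, Real.cos_add_pi, Real.sin_add_pi, Real.cos_add_pi]
  have h2' : (2-α)^2 * -Real.cos q / -Real.sin q = (2-α)^2 * Real.cos q / Real.sin q := by
    rw [mul_neg, neg_div_neg_eq]
  have h3' : 4 * -Real.cos (p+q) / -Real.sin (p+q) = 4 * Real.cos (p+q) / Real.sin (p+q) := by
    rw [mul_neg, neg_div_neg_eq]
  rw [h2', h3']
  have := cot_ineq α p q hs1 hq hpq
  linarith

open Set Filter Topology in
lemma Lmono {α : ℝ} (hα0 : 0 < α) (hα1 : α < 1) :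
    StrictMonoOn (Lfun α) (Set.Ioo (π/(2-α)) π) := by
  apply strictMonoOn_of_deriv_pos (convex_Ioo _ _)
  · intro θ hθ
    exact (Lderiv hα0 hα1 hθ).continuousAt.continuousWithinAt
  · intro θ hθ
    rw [interior_Ioo] at hθ
    rw [(Lderiv hα0 hα1 hθ).deriv]
    exact Lderiv_pos hα0 hα1 hθ

open Set Filter Topology in
lemma Lsurj {α : ℝ} (hα0 : 0 < α) (hα1 : α < 1) (C : ℝ) :
    ∃ θ ∈ Set.Ioo (π/(2-α)) π, Lfun α θ = C := by
  have hπ : 0 < π := Real.pi_pos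
  set l := π/(2-α) with hl
  have hβ : (1:ℝ) < 2-α := by linarith
  have h2a : (0:ℝ) < 2-α := by linarith
  have hlu : l < π := by
    rw [hl, div_lt_iff₀ h2a]; nlinarith
  have hl0 : 0 < l := by positivity
  set I := Set.Ioo l π with hI
  -- limit at left endpoint: atBot
  have hmeml : l ∈ closure I := by
    rw [hI, closure_Ioo (ne_of_lt hlu)]; exact ⟨le_refl l, hlu.le⟩
  haveI hNB : (𝓝[I] l).NeBot := mem_closure_iff_nhdsWithin_neBot.1 hmeml
  have hmemu : π ∈ closure I := by
    rw [hI, closure_Ioo (ne_of_lt hlu)]; exact ⟨hlu.le, le_refl π⟩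
  haveI hNB2 : (𝓝[I] π).NeBot := mem_closure_iff_nhdsWithin_neBot.1 hmemu
  -- tendsto pieces
  have hcont2 : Continuous fun t : ℝ => -Real.sin ((2-α)*t) := by fun_prop
  have hcont3 : Continuous fun t : ℝ => -Real.sin (2*t) := by fun_prop
  have hev : ∀ᶠ t in 𝓝[I] l, t ∈ I := eventually_mem_nhdsWithin
  have hev2 : ∀ᶠ t in 𝓝[I] π, t ∈ I := eventually_mem_nhdsWithin
  -- at l : -sin((2-α)t) → 0 within {0}ᶜ
  have hval : -Real.sin ((2-α)*l) = 0 := by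
    rw [hl]
    have : (2-α) * (π/(2-α)) = π := by field_simp
    rw [this, Real.sin_pi, neg_zero]
  have t2bot : Tendsto (fun t => Real.log (-Real.sin ((2-α)*t))) (𝓝[I] l) atBot := by
    apply Real.tendsto_log_nhdsNE_zero.comp
    apply tendsto_nhdsWithin_of_tendsto_nhds_of_eventually_within
    · rw [← hval]; exact (hcont2.tendsto l).mono_left nhdsWithin_le_nhds
    · filter_upwards [hev] with t ht
      have := (signs hα0 hα1 ht).2.1
      simp only [Set.mem_compl_iff, Set.mem_singleton_iff]
      intro h; nlinarith [h]
  have t1fin : Tendsto (fun t => α * Real.log (Real.sin (α*t))) (𝓝[I] l)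
      (𝓝 (α * Real.log (Real.sin (α*l)))) := by
    have hs : 0 < Real.sin (α*l) := by
      apply Real.sin_pos_of_pos_of_lt_pi (by positivity)
      calc α * l < 1 * l := mul_lt_mul_of_pos_right hα1 hl0
      _ = l := one_mul _
      _ < π := hlu
    have : ContinuousAt (fun t : ℝ => α * Real.log (Real.sin (α*t))) l :=
      (ContinuousAt.log (f := fun t : ℝ => Real.sin (α*t)) (by fun_prop) hs.ne').const_mul α
    exact this.mono_left nhdsWithin_le_nhds
  have t3fin : Tendsto (fun t => 2 * Real.log (-Real.sin (2*t))) (𝓝[I] l)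
      (𝓝 (2 * Real.log (-Real.sin (2*l)))) := by
    have h2a : (0:ℝ) < 2-α := by linarith
    have hs : Real.sin (2*l) < 0 := by
      rw [show 2*l = 2*π/(2-α) by rw [hl]; ring]
      apply sin_neg_of_gt_pi
      · rw [lt_div_iff₀ h2a]; nlinarith
      · rw [div_lt_iff₀ h2a]; nlinarith
    have : ContinuousAt (fun t : ℝ => 2 * Real.log (-Real.sin (2*t))) l :=
      (ContinuousAt.log (f := fun t : ℝ => -Real.sin (2*t)) (by fun_prop)
        (by linarith : -Real.sin (2*l) ≠ 0)).const_mul 2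
    exact this.mono_left nhdsWithin_le_nhds
  have Lbot : Tendsto (Lfun α) (𝓝[I] l) atBot := by
    have h12 : Tendsto (fun t => α * Real.log (Real.sin (α*t))
        + (2-α) * Real.log (-Real.sin ((2-α)*t))) (𝓝[I] l) atBot :=
      t1fin.add_atBot (t2bot.const_mul_atBot (by linarith : (0:ℝ) < 2-α))
    have := h12.atBot_add t3fin.neg
    apply this.congr
    intro t; simp [Lfun]; ring
  -- at π : atTop
  have hvalu : -Real.sin (2*π) = 0 := by simp [Real.sin_two_pi]
  have t3top : Tendsto (fun t => -(2 * Real.log (-Real.sin (2*t)))) (𝓝[I] π) atTop := by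
    have hb : Tendsto (fun t => Real.log (-Real.sin (2*t))) (𝓝[I] π) atBot := by
      apply Real.tendsto_log_nhdsNE_zero.comp
      apply tendsto_nhdsWithin_of_tendsto_nhds_of_eventually_within
      · rw [← hvalu]; exact (hcont3.tendsto π).mono_left nhdsWithin_le_nhds
      · filter_upwards [hev2] with t ht
        have := (signs hα0 hα1 ht).2.2
        simp only [Set.mem_compl_iff, Set.mem_singleton_iff]
        intro h; nlinarith [h]
    have := hb.const_mul_atBot_of_neg (by norm_num : (-2:ℝ) < 0)
    apply this.congr; intro t; ring
  have hsapi : 0 < Real.sin (α*π) := by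
    apply Real.sin_pos_of_pos_of_lt_pi (by positivity); nlinarith
  have hsbpi : Real.sin ((2-α)*π) < 0 := by
    apply sin_neg_of_gt_pi <;> nlinarith
  have t1finu : Tendsto (fun t => α * Real.log (Real.sin (α*t))) (𝓝[I] π)
      (𝓝 (α * Real.log (Real.sin (α*π)))) :=
    ((ContinuousAt.log (f := fun t : ℝ => Real.sin (α*t)) (by fun_prop)
      hsapi.ne').const_mul α).mono_left nhdsWithin_le_nhds
  have t2finu : Tendsto (fun t => (2-α) * Real.log (-Real.sin ((2-α)*t))) (𝓝[I] π)
      (𝓝 ((2-α) * Real.log (-Real.sin ((2-α)*π)))) :=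
    ((ContinuousAt.log (f := fun t : ℝ => -Real.sin ((2-α)*t)) (by fun_prop)
      (by linarith : -Real.sin ((2-α)*π) ≠ 0)).const_mul (2-α)).mono_left nhdsWithin_le_nhds
  have Ltop : Tendsto (Lfun α) (𝓝[I] π) atTop := by
    have := (t1finu.add t2finu).add_atTop t3top
    apply this.congr
    intro t; simp [Lfun]; ring
  -- pick θ₁, θ₂
  obtain ⟨θ₁, hθ₁C, hθ₁I⟩ := ((Lbot.eventually (eventually_lt_atBot C)).and hev).exists
  obtain ⟨θ₂, hθ₂C, hθ₂I⟩ := ((Ltop.eventually (eventually_gt_atTop C)).and hev2).exists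
  have h12 : θ₁ < θ₂ := by
    by_contra h
    push_neg at h
    rcases eq_or_lt_of_le h with h' | h'
    · rw [h'] at hθ₂C; linarith
    · have := Lmono hα0 hα1 hθ₂I hθ₁I h'
      linarith
  have hsub : Set.Icc θ₁ θ₂ ⊆ I := fun t ht => ⟨lt_of_lt_of_le hθ₁I.1 ht.1, lt_of_le_of_lt ht.2 hθ₂I.2⟩
  have := intermediate_value_Ioo h12.le ((Lcont hα0 hα1).mono hsub)
  obtain ⟨θ, hθmem, hθval⟩ := this ⟨hθ₁C, hθ₂C⟩
  exact ⟨θ, hsub ⟨hθmem.1.le, hθmem.2.le⟩, hθval⟩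

lemma Peq (τ a α lam th : ℝ) (h1 : -π < th) (h2 : th ≤ π) :
    ((τ:ℂ) * (Complex.exp ((lam:ℂ) + (th:ℂ)*Complex.I))^2
      + (Complex.exp ((lam:ℂ) + (th:ℂ)*Complex.I)) ^ (α : ℂ) - (a:ℂ) = 0) ↔
    (τ * Real.exp (2*lam) * Real.cos (2*th) + Real.exp (α*lam) * Real.cos (α*th) = a ∧
     τ * Real.exp (2*lam) * Real.sin (2*th) + Real.exp (α*lam) * Real.sin (α*th) = 0) := by
  have him : ((lam:ℂ) + (th:ℂ)*Complex.I).im = th := by simp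
  have hlog : Complex.log (Complex.exp ((lam:ℂ) + (th:ℂ)*Complex.I)) = (lam:ℂ) + (th:ℂ)*Complex.I :=
    Complex.log_exp (by rw [him]; exact h1) (by rw [him]; exact h2)
  have hcpow : (Complex.exp ((lam:ℂ) + (th:ℂ)*Complex.I)) ^ (α : ℂ)
      = Complex.exp (((α*lam : ℝ) : ℂ) + ((α*th : ℝ):ℂ)*Complex.I) := by
    rw [cpow_def_of_ne_zero (Complex.exp_ne_zero _), hlog]
    congr 1; push_cast; ring
  have hsq : (Complex.exp ((lam:ℂ) + (th:ℂ)*Complex.I))^2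
      = Complex.exp (((2*lam : ℝ) : ℂ) + ((2*th : ℝ):ℂ)*Complex.I) := by
    rw [← Complex.exp_nat_mul]
    congr 1; push_cast; ring
  rw [hsq, hcpow]
  rw [Complex.ext_iff]
  constructor
  · rintro ⟨hre, himz⟩
    simp only [Complex.ext_iff, Complex.exp_re, Complex.exp_im, Complex.add_re, Complex.add_im,
      Complex.ofReal_re, Complex.ofReal_im, Complex.mul_re, Complex.mul_im, Complex.I_re,
      Complex.I_im, Complex.sub_re, Complex.sub_im, Complex.zero_re, Complex.zero_im] at hre himz
    ring_nf at hre himz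
    constructor
    · ring_nf; linarith
    · ring_nf; linarith
  · rintro ⟨hre, himz⟩
    constructor
    · simp only [Complex.exp_re, Complex.exp_im, Complex.add_re, Complex.add_im,
        Complex.ofReal_re, Complex.ofReal_im, Complex.mul_re, Complex.mul_im, Complex.I_re,
        Complex.I_im, Complex.sub_re, Complex.zero_re]
      ring_nf
      ring_nf at hre
      linarith
    · simp only [Complex.exp_re, Complex.exp_im, Complex.add_re, Complex.add_im,
        Complex.ofReal_re, Complex.ofReal_im, Complex.mul_re, Complex.mul_im, Complex.I_re,
        Complex.I_im, Complex.sub_im, Complex.zero_im]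
      ring_nf
      ring_nf at himz
      linarith

lemma realroot (τ a α : ℝ) (hτ : 0 < τ) (ha : 0 < a) (hα : α ∈ Set.Ioo (0:ℝ) 1) :
    ∃! x : ℝ, 0 < x ∧ τ * x ^ 2 + x ^ α - a = 0 := by
  obtain ⟨hα0, hα1⟩ := hα
  set f : ℝ → ℝ := fun x => τ * x ^ 2 + x ^ α - a with hf
  have hmono : StrictMonoOn f (Set.Ici (0:ℝ)) := by
    intro x hx y hy hxy
    simp only [hf]
    have h1 : τ * x ^ 2 < τ * y ^ 2 := by
      have : x^2 < y^2 := by nlinarith [hx.out, hxy]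
      nlinarith
    have h2 : x ^ α < y ^ α := Real.rpow_lt_rpow hx.out hxy hα0
    linarith
  have hcont : Continuous f := by
    have h1 : Continuous fun x : ℝ => x ^ α := Real.continuous_rpow_const hα0.le
    exact ((continuous_const.mul (continuous_pow 2)).add h1).sub continuous_const
  set M : ℝ := max 1 (a / τ) with hM
  have hM1 : (1:ℝ) ≤ M := le_max_left _ _
  have hM2 : a / τ ≤ M := le_max_right _ _
  have hM0 : 0 < M := by linarith
  have hf0 : f 0 = -a := by
    simp [hf, Real.zero_rpow hα0.ne']
  have hfM : 0 < f M := by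
    have h1 : a ≤ τ * M ^ 2 := by
      have : a / τ ≤ M ^ 2 := by nlinarith
      calc a = τ * (a / τ) := by field_simp
      _ ≤ τ * M ^ 2 := by nlinarith
    have h2 : 0 < M ^ α := Real.rpow_pos_of_pos hM0 α
    simp only [hf]; linarith
  have hivt := intermediate_value_Ioo (le_of_lt hM0) hcont.continuousOn (a := 0) (b := M)
  have h0mem : (0:ℝ) ∈ Set.Ioo (f 0) (f M) := by
    rw [hf0]; exact ⟨by linarith, hfM⟩
  obtain ⟨x, hxmem, hxval⟩ := hivt h0mem
  have hxval' : τ * x ^ 2 + x ^ α - a = 0 := hxval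
  refine ⟨x, ⟨hxmem.1, hxval'⟩, ?_⟩
  rintro y ⟨hy0, hyval⟩
  have hxf : f x = 0 := hxval
  have hyf : f y = 0 := hyval
  exact hmono.injOn (Set.mem_Ici.2 hy0.le) (Set.mem_Ici.2 hxmem.1.le) (by rw [hxf, hyf])

open Set Filter Topology in
lemma upper_unique {τ a α : ℝ} (hτ : 0 < τ) (ha : 0 < a) (hα0 : 0 < α) (hα1 : α < 1)
    {θ lam θw lw : ℝ}
    (hθI : θ ∈ Set.Ioo (π/(2-α)) π)
    (hθL : Lfun α θ = α * Real.log τ + (2-α) * Real.log a)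
    (hαlam : α*lam = Real.log a + Real.log (-Real.sin (2*θ)) - Real.log (-Real.sin ((2-α)*θ)))
    (hθw0 : 0 < θw) (hθwπ : θw < π)
    (hre : τ * Real.exp (2*lw) * Real.cos (2*θw) + Real.exp (α*lw) * Real.cos (α*θw) = a)
    (him : τ * Real.exp (2*lw) * Real.sin (2*θw) + Real.exp (α*lw) * Real.sin (α*θw) = 0) :
    θw = θ ∧ lw = lam := by
  have hπ : 0 < π := Real.pi_pos
  have h2a : (0:ℝ) < 2-α := by linarith
  have htr1 : Real.sin ((2-α)*θw)
      = Real.sin (2*θw) * Real.cos (α*θw) - Real.cos (2*θw) * Real.sin (α*θw) := by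
    have h := Real.sin_sub (2*θw) (α*θw)
    rw [show 2*θw - α*θw = (2-α)*θw by ring] at h
    linarith
  have hE2pos : 0 < τ * Real.exp (2*lw) := by positivity
  have hE1pos : 0 < Real.exp (α*lw) := Real.exp_pos _
  have d1 : a * Real.sin (α*θw) = -(τ * Real.exp (2*lw)) * Real.sin ((2-α)*θw) := by
    linear_combination -Real.sin (α*θw) * hre + Real.cos (α*θw) * him
      + (τ * Real.exp (2*lw)) * htr1
  have d2 : a * Real.sin (2*θw) = Real.exp (α*lw) * Real.sin ((2-α)*θw) := by
    linear_combination -Real.sin (2*θw) * hre + Real.cos (2*θw) * him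
      - Real.exp (α*lw) * htr1
  have hsa : 0 < Real.sin (α*θw) :=
    Real.sin_pos_of_pos_of_lt_pi (by positivity) (by nlinarith)
  have hsb : Real.sin ((2-α)*θw) < 0 := by nlinarith
  have hθwl : π/(2-α) < θw := by
    by_contra h
    push_neg at h
    have h1 : (2-α)*θw ≤ π := by
      have := (le_div_iff₀ h2a).1 h
      nlinarith
    have := Real.sin_nonneg_of_nonneg_of_le_pi (by positivity) h1
    linarith
  have hθwI : θw ∈ Set.Ioo (π/(2-α)) π := ⟨hθwl, hθwπ⟩
  obtain ⟨hS1, hS2, hS3⟩ := signs hα0 hα1 hθwI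
  have hE2 : τ * Real.exp (2*lw) = a * Real.sin (α*θw) / (-Real.sin ((2-α)*θw)) := by
    rw [eq_div_iff (by linarith)]
    linear_combination -d1
  have hE1 : Real.exp (α*lw) = a * (-Real.sin (2*θw)) / (-Real.sin ((2-α)*θw)) := by
    rw [eq_div_iff (by linarith)]
    linear_combination d2
  have hαlw : α*lw = Real.log a + Real.log (-Real.sin (2*θw)) - Real.log (-Real.sin ((2-α)*θw)) := by
    have h := congrArg Real.log hE1
    rw [Real.log_exp, Real.log_div (mul_ne_zero ha.ne' (by linarith)) (by linarith),
      Real.log_mul ha.ne' (by linarith)] at h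
    linarith
  have h2lw : Real.log τ + 2*lw
      = Real.log a + Real.log (Real.sin (α*θw)) - Real.log (-Real.sin ((2-α)*θw)) := by
    have h := congrArg Real.log hE2
    rw [Real.log_mul hτ.ne' (Real.exp_ne_zero _), Real.log_exp,
      Real.log_div (mul_ne_zero ha.ne' hS1.ne') (by linarith),
      Real.log_mul ha.ne' hS1.ne'] at h
    linarith
  have hLθw : Lfun α θw = α * Real.log τ + (2-α) * Real.log a := by
    simp only [Lfun]
    linear_combination 2 * hαlw - α * h2lw
  have hθθ : θw = θ := (Lmono hα0 hα1).injOn hθwI hθI (by rw [hLθw, hθL])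
  refine ⟨hθθ, ?_⟩
  rw [hθθ] at hαlw
  exact mul_left_cancel₀ hα0.ne' (hαlw.trans hαlam.symm)


/-- The characteristic function `P(z) = τz² + z^α - a` (principal branch of `z^α`)
has exactly one positive real root, and its remaining roots on the principal
branch form one complex-conjugate pair with strictly negative real part. -/
theorem stmt9 (τ a α : ℝ) (hτ : 0 < τ) (ha : 0 < a) (hα : α ∈ Set.Ioo (0:ℝ) 1) :
    (∃! x : ℝ, 0 < x ∧ τ * x ^ 2 + x ^ α - a = 0) ∧
    ∃ x : ℝ, (0 < x ∧ τ * x ^ 2 + x ^ α - a = 0) ∧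
      ∃ z : ℂ, 0 < z.im ∧ z.re < 0 ∧
        (τ : ℂ) * z ^ 2 + z ^ (α : ℂ) - (a : ℂ) = 0 ∧
        (τ : ℂ) * (starRingEnd ℂ z) ^ 2 + (starRingEnd ℂ z) ^ (α : ℂ) - (a : ℂ) = 0 ∧
        ∀ w : ℂ, -π < w.arg → w.arg < π →
          (τ : ℂ) * w ^ 2 + w ^ (α : ℂ) - (a : ℂ) = 0 →
          w = (x : ℂ) ∨ w = z ∨ w = starRingEnd ℂ z := by
  obtain ⟨hα0, hα1⟩ := hα
  have hπ : 0 < π := Real.pi_pos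
  have h2a : (0:ℝ) < 2-α := by linarith
  obtain ⟨x, hx, hxu⟩ := realroot τ a α hτ ha ⟨hα0, hα1⟩
  refine ⟨⟨x, hx, hxu⟩, x, hx, ?_⟩
  obtain ⟨θ, hθI, hθL⟩ := Lsurj hα0 hα1 (α * Real.log τ + (2-α) * Real.log a)
  obtain ⟨hS1, hS2, hS3⟩ := signs hα0 hα1 hθI
  set lam := (Real.log a + Real.log (-Real.sin (2*θ)) - Real.log (-Real.sin ((2-α)*θ)))/α
    with hlamdef
  have hαlam : α*lam
      = Real.log a + Real.log (-Real.sin (2*θ)) - Real.log (-Real.sin ((2-α)*θ)) := by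
    rw [hlamdef]; field_simp
  set z : ℂ := Complex.exp ((lam:ℂ) + (θ:ℂ)*Complex.I) with hzdef
  have hθ0 : 0 < θ := lt_trans (div_pos hπ h2a) hθI.1
  have hθπ : θ < π := hθI.2
  have hE1 : Real.exp (α*lam) = a * (-Real.sin (2*θ)) / (-Real.sin ((2-α)*θ)) := by
    rw [hαlam, Real.exp_sub, Real.exp_add, Real.exp_log ha,
      Real.exp_log (by linarith : (0:ℝ) < -Real.sin (2*θ)),
      Real.exp_log (by linarith : (0:ℝ) < -Real.sin ((2-α)*θ))]
  have hLθ : α * Real.log (Real.sin (α*θ)) + (2-α) * Real.log (-Real.sin ((2-α)*θ))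
      - 2 * Real.log (-Real.sin (2*θ)) = α * Real.log τ + (2-α) * Real.log a := by
    simpa [Lfun] using hθL
  have h2lam : 2*lam = Real.log a + Real.log (Real.sin (α*θ))
      - Real.log (-Real.sin ((2-α)*θ)) - Real.log τ := by
    apply mul_left_cancel₀ hα0.ne'
    linear_combination 2*hαlam - hLθ
  have hE2 : τ * Real.exp (2*lam) = a * Real.sin (α*θ) / (-Real.sin ((2-α)*θ)) := by
    rw [h2lam, Real.exp_sub, Real.exp_sub, Real.exp_add, Real.exp_log ha,
      Real.exp_log hS1, Real.exp_log (by linarith : (0:ℝ) < -Real.sin ((2-α)*θ)),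
      Real.exp_log hτ]
    rw [mul_comm, div_mul_cancel₀ _ hτ.ne']
  have htrθ : Real.sin ((2-α)*θ)
      = Real.sin (2*θ) * Real.cos (α*θ) - Real.cos (2*θ) * Real.sin (α*θ) := by
    have h := Real.sin_sub (2*θ) (α*θ)
    rw [show 2*θ - α*θ = (2-α)*θ by ring] at h
    linarith
  have hsys_re : τ * Real.exp (2*lam) * Real.cos (2*θ) + Real.exp (α*lam) * Real.cos (α*θ)
      = a := by
    rw [hE2, hE1]
    rw [div_mul_eq_mul_div, div_mul_eq_mul_div, ← add_div,
      div_eq_iff (by linarith : -Real.sin ((2-α)*θ) ≠ 0)]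
    linear_combination a * htrθ
  have hsys_im : τ * Real.exp (2*lam) * Real.sin (2*θ) + Real.exp (α*lam) * Real.sin (α*θ)
      = 0 := by
    rw [hE2, hE1]
    field_simp
    ring
  have hzroot : (τ:ℂ) * z^2 + z ^ (α:ℂ) - (a:ℂ) = 0 :=
    (Peq τ a α lam θ (by linarith) hθπ.le).2 ⟨hsys_re, hsys_im⟩
  have hconj : (starRingEnd ℂ) z = Complex.exp ((lam:ℂ) + ((-θ:ℝ):ℂ)*Complex.I) := by
    rw [hzdef, ← Complex.exp_conj]
    congr 1
    rw [map_add, map_mul, Complex.conj_ofReal, Complex.conj_ofReal, Complex.conj_I]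
    push_cast
    ring
  have hsys_re' : τ * Real.exp (2*lam) * Real.cos (2*(-θ)) + Real.exp (α*lam) * Real.cos (α*(-θ))
      = a := by
    rw [show 2*(-θ) = -(2*θ) by ring, show α*(-θ) = -(α*θ) by ring,
      Real.cos_neg, Real.cos_neg]
    exact hsys_re
  have hsys_im' : τ * Real.exp (2*lam) * Real.sin (2*(-θ)) + Real.exp (α*lam) * Real.sin (α*(-θ))
      = 0 := by
    rw [show 2*(-θ) = -(2*θ) by ring, show α*(-θ) = -(α*θ) by ring,
      Real.sin_neg, Real.sin_neg]
    linarith [hsys_im]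
  have hconjroot : (τ:ℂ) * ((starRingEnd ℂ) z)^2 + ((starRingEnd ℂ) z) ^ (α:ℂ) - (a:ℂ) = 0 := by
    rw [hconj]
    exact (Peq τ a α lam (-θ) (by linarith) (by linarith)).2 ⟨hsys_re', hsys_im'⟩
  have hzim : 0 < z.im := by
    have : z.im = Real.exp lam * Real.sin θ := by
      rw [hzdef, Complex.exp_im]; simp
    rw [this]
    exact mul_pos (Real.exp_pos _) (Real.sin_pos_of_pos_of_lt_pi hθ0 hθπ)
  have hzre : z.re < 0 := by
    have hrep : z.re = Real.exp lam * Real.cos θ := by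
      rw [hzdef, Complex.exp_re]; simp
    have hc : Real.cos θ < 0 := by
      apply Real.cos_neg_of_pi_div_two_lt_of_lt
      · calc π/2 < π/(2-α) := by
              apply div_lt_div_of_pos_left hπ h2a (by linarith)
        _ < θ := hθI.1
      · linarith
    rw [hrep]
    exact mul_neg_of_pos_of_neg (Real.exp_pos _) hc
  refine ⟨z, hzim, hzre, hzroot, hconjroot, ?_⟩
  intro w hw1 hw2 hweq
  have hwne : w ≠ 0 := by
    rintro rfl
    rw [Complex.zero_cpow (Complex.ofReal_ne_zero.2 hα0.ne')] at hweq
    simp [Complex.ext_iff] at hweq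
    linarith
  set lw := Real.log ‖w‖ with hlw
  have hwrep : w = Complex.exp ((lw:ℂ) + (w.arg:ℂ)*Complex.I) := by
    have hlogw : Complex.log w = (lw:ℂ) + (w.arg:ℂ)*Complex.I := by
      apply Complex.ext <;> simp [Complex.log_re, Complex.log_im, hlw]
    rw [← hlogw, Complex.exp_log hwne]
  rw [hwrep] at hweq
  obtain ⟨hre, him⟩ := (Peq τ a α lw w.arg hw1 hw2.le).1 hweq
  rcases lt_trichotomy w.arg 0 with hneg | hzero | hpos
  · -- w in lower half plane : w = conj z
    right; right
    have hre' : τ * Real.exp (2*lw) * Real.cos (2*(-w.arg))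
        + Real.exp (α*lw) * Real.cos (α*(-w.arg)) = a := by
      rw [show 2*(-w.arg) = -(2*w.arg) by ring, show α*(-w.arg) = -(α*w.arg) by ring,
        Real.cos_neg, Real.cos_neg]
      exact hre
    have him' : τ * Real.exp (2*lw) * Real.sin (2*(-w.arg))
        + Real.exp (α*lw) * Real.sin (α*(-w.arg)) = 0 := by
      rw [show 2*(-w.arg) = -(2*w.arg) by ring, show α*(-w.arg) = -(α*w.arg) by ring,
        Real.sin_neg, Real.sin_neg]
      linarith [him]
    obtain ⟨hθeq, hleq⟩ := upper_unique hτ ha hα0 hα1 hθI hθL hαlam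
      (by linarith) (by linarith) hre' him'
    rw [hwrep, hconj, hleq, show (w.arg : ℝ) = -θ by linarith [hθeq]]
  · -- w real positive : w = x
    left
    rw [hzero] at hre hwrep
    have hre2 : τ * Real.exp (2*lw) + Real.exp (α*lw) = a := by
      simpa using hre
    set xr := Real.exp lw with hxr
    have hx2 : Real.exp (2*lw) = xr^2 := by
      rw [two_mul, Real.exp_add, hxr]; ring
    have hxα : Real.exp (α*lw) = xr^α := by
      rw [hxr, Real.rpow_def_of_pos (Real.exp_pos _), Real.log_exp, mul_comm]
    have hxrx : xr = x := by
      apply hxu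
      refine ⟨Real.exp_pos _, ?_⟩
      rw [← hx2, ← hxα]
      linarith
    rw [hwrep, ← hxrx]
    push_cast
    simp [← Complex.ofReal_exp, hxr]
  · -- w in upper half plane : w = z
    right; left
    obtain ⟨hθeq, hleq⟩ := upper_unique hτ ha hα0 hα1 hθI hθL hαlam hpos hw2 hre him
    rw [hwrep, hzdef, hθeq, hleq]
end

section
/- Fix τ > 0, a > 0, α ∈ (0,1). The function z ↦ τ z² + z^α + a on the principal branch of z^α (−π < arg z < π) has no real nonnegative roots, and all its roots on this branch have strictly negative real part. -/
open Complex Real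

/-- The characteristic function `z ↦ τz² + z^α + a` (principal branch of `z^α`)
has no nonnegative real roots, and every root on the principal branch has
strictly negative real part. -/
theorem stmt10 (τ a α : ℝ) (hτ : 0 < τ) (ha : 0 < a) (hα : α ∈ Set.Ioo (0:ℝ) 1) :
    (∀ x : ℝ, 0 ≤ x → τ * x ^ 2 + x ^ α + a ≠ 0) ∧
    ∀ z : ℂ, -π < z.arg → z.arg < π →
      (τ : ℂ) * z ^ 2 + z ^ (α : ℂ) + (a : ℂ) = 0 → z.re < 0 := by
  obtain ⟨hα0, hα1⟩ := hα
  have key : ∀ x : ℝ, 0 ≤ x → τ * x ^ 2 + x ^ α + a ≠ 0 := by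
    intro x hx h
    have h1 : 0 ≤ τ * x ^ 2 := by positivity
    have h2 : 0 ≤ x ^ α := Real.rpow_nonneg hx α
    nlinarith
  refine ⟨key, ?_⟩
  intro z hlo hhi heq
  by_contra hre
  push_neg at hre
  have hz : z ≠ 0 := by
    rintro rfl
    rw [Complex.zero_cpow (by exact_mod_cast hα0.ne')] at heq
    simp at heq
    exact ha.ne' (by exact_mod_cast heq)
  have hcp : z ^ (α : ℂ) = Complex.exp ((α : ℂ) * Complex.log z) := by
    rw [Complex.cpow_def_of_ne_zero hz, mul_comm]
  have him := congrArg Complex.im heq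
  rw [hcp] at him
  simp [Complex.add_im, Complex.mul_im, Complex.mul_re, Complex.exp_im,
    Complex.log_re, Complex.log_im, pow_two] at him
  -- him : τ * (z.re * z.im + z.im * z.re) + Real.exp (α * Real.log (abs z)) * Real.sin (α * z.arg) = 0
  have hexp : 0 < Real.exp (α * Real.log ‖z‖) := Real.exp_pos _
  rcases lt_trichotomy z.im 0 with him0 | him0 | him0
  · -- im < 0 : arg < 0, arg ≥ -π/2
    have harg0 : z.arg < 0 := Complex.arg_neg_iff.mpr him0
    have harg1 : -(π/2) ≤ z.arg := Complex.neg_pi_div_two_le_arg_iff.mpr (Or.inl hre)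
    have hs : Real.sin (α * z.arg) < 0 := by
      have h1 : α * z.arg < 0 := mul_neg_of_pos_of_neg hα0 harg0
      have h2 : -π < α * z.arg := by nlinarith [Real.pi_pos]
      have := Real.sin_pos_of_pos_of_lt_pi (x := -(α * z.arg)) (by linarith) (by linarith)
      rw [Real.sin_neg] at this; linarith
    have t1 : 0 ≤ τ * (z.re * -z.im) := mul_nonneg hτ.le (mul_nonneg hre (by linarith))
    have t2 : rexp (α * Real.log ‖z‖) * Real.sin (α * z.arg) < 0 :=
      mul_neg_of_pos_of_neg hexp hs
    nlinarith
  · -- im = 0 : z real nonneg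
    have hzre : 0 < z.re := by
      rcases hre.lt_or_eq with h | h
      · exact h
      · exact absurd (Complex.ext h.symm him0) hz
    have hzeq : z = ((z.re : ℝ) : ℂ) := Complex.ext rfl him0
    rw [hzeq, ← Complex.ofReal_cpow hzre.le] at heq
    have := congrArg Complex.re heq
    simp [Complex.add_re, Complex.mul_re, pow_two] at this
    exact key z.re hzre.le (by nlinarith [this])
  · -- im > 0
    have harg0 : 0 < z.arg := by
      rcases (Complex.arg_nonneg_iff.mpr him0.le).lt_or_eq with h | h
      · exact h
      · exact absurd ((Complex.arg_eq_zero_iff.mp h.symm).2) him0.ne'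
    have harg1 : z.arg ≤ π/2 := Complex.arg_le_pi_div_two_iff.mpr (Or.inl hre)
    have hs : 0 < Real.sin (α * z.arg) := by
      apply Real.sin_pos_of_pos_of_lt_pi
      · exact mul_pos hα0 harg0
      · nlinarith [Real.pi_pos]
    have t1 : 0 ≤ τ * (z.re * z.im) := mul_nonneg hτ.le (mul_nonneg hre him0.le)
    have t2 : 0 < rexp (α * Real.log ‖z‖) * Real.sin (α * z.arg) :=
      mul_pos hexp hs
    nlinarith
end

section
/- Suppose X : I → ℝ is continuous, X ≥ 0 initially, and satisfies the two-sided inequality -B₂ - C₂ X(t)² ≤ X(t) ≤ B₁ - C₁ X(t)² for all t in an interval I, where B₁, B₂, C₁, C₂ > 0 with 4 B₂ C₂ < 1. Then for all t ∈ I, (−1 + √(1 − 4 B₂ C₂))/(2 C₂) ≤ X(t) ≤ (−1 + √(1 + 4 B₁ C₁))/(2 C₁). -/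
/-- Parabola-root trapping: a continuous function squeezed between two quadratic
inequalities and nonnegative initially stays between the corresponding roots. -/
theorem stmt14 (t0 t1 : ℝ) (X : ℝ → ℝ)
    (hX : ContinuousOn X (Set.Icc t0 t1)) (ht : t0 ≤ t1)
    (hinit : 0 ≤ X t0)
    (B1 B2 C1 C2 : ℝ) (hB1 : 0 < B1) (hB2 : 0 < B2) (hC1 : 0 < C1) (hC2 : 0 < C2)
    (hsmall : 4 * B2 * C2 < 1)
    (hineq : ∀ t ∈ Set.Icc t0 t1,
      -B2 - C2 * X t ^ 2 ≤ X t ∧ X t ≤ B1 - C1 * X t ^ 2) :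
    ∀ t ∈ Set.Icc t0 t1,
      (-1 + Real.sqrt (1 - 4 * B2 * C2)) / (2 * C2) ≤ X t ∧
      X t ≤ (-1 + Real.sqrt (1 + 4 * B1 * C1)) / (2 * C1) := by
  have hD : (0:ℝ) < 1 - 4 * B2 * C2 := by linarith
  set s : ℝ := Real.sqrt (1 - 4 * B2 * C2) with hsdef
  have hs2 : s ^ 2 = 1 - 4 * B2 * C2 := Real.sq_sqrt hD.le
  have hs0 : 0 < s := Real.sqrt_pos.mpr hD
  have hs1 : s < 1 := by nlinarith
  -- dichotomy from the lower quadratic inequality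
  have dich : ∀ u ∈ Set.Icc t0 t1,
      X u ≤ (-1 - s) / (2 * C2) ∨ (-1 + s) / (2 * C2) ≤ X u := by
    intro u hu
    have hq := (hineq u hu).1
    rcases le_or_gt (X u) ((-1 - s) / (2 * C2)) with h | h
    · exact Or.inl h
    · right
      by_contra hc
      push_neg at hc
      rw [div_lt_iff₀ (by positivity)] at h
      rw [lt_div_iff₀ (by positivity)] at hc
      nlinarith [mul_pos (by linarith : (0:ℝ) < s - (2 * C2 * X u + 1))
        (by linarith : (0:ℝ) < 2 * C2 * X u + 1 + s)]
  have rhneg : (-1 + s) / (2 * C2) < 0 :=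
    div_neg_of_neg_of_pos (by linarith) (by positivity)
  intro t htI
  constructor
  · -- lower bound
    by_contra hc
    push_neg at hc
    have hlow : X t ≤ (-1 - s) / (2 * C2) := (dich t htI).resolve_right (not_le.mpr hc)
    have hmid1 : (-1 - s) / (2 * C2) < (-1) / (2 * C2) :=
      (div_lt_div_iff_of_pos_right (by positivity)).mpr (by linarith)
    have hmid2 : (-1 : ℝ) / (2 * C2) < (-1 + s) / (2 * C2) :=
      (div_lt_div_iff_of_pos_right (by positivity)).mpr (by linarith)
    have hmem : (-1 : ℝ) / (2 * C2) ∈ Set.Icc (X t) (X t0) :=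
      ⟨by linarith, by linarith⟩
    have hsub : Set.Icc t0 t ⊆ Set.Icc t0 t1 := Set.Icc_subset_Icc_right htI.2
    obtain ⟨u, hu, hum⟩ := intermediate_value_Icc' htI.1 (hX.mono hsub) hmem
    rcases dich u (hsub hu) with h | h <;> rw [hum] at h <;> linarith
  · -- upper bound (pointwise)
    have h2 := (hineq t htI).2
    set r : ℝ := Real.sqrt (1 + 4 * B1 * C1) with hrdef
    have hr2 : r ^ 2 = 1 + 4 * B1 * C1 := Real.sq_sqrt (by positivity)
    have hr0 : 0 ≤ r := Real.sqrt_nonneg _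
    rw [le_div_iff₀ (by positivity)]
    by_contra hc
    push_neg at hc
    nlinarith [mul_pos (by linarith : (0:ℝ) < 2 * C1 * X t + 1 - r)
      (by linarith : (0:ℝ) < 2 * C1 * X t + 1 + r)]
end

section
/- Let τ > 0 and suppose w : [s₀,∞) → (0,∞) is C¹ and satisfies 1/τ - 2w(s)² - g(s) ≤ w'(s) ≤ 1/τ - 2w(s)² for all s ≥ s₀, where g : [s₀,∞) → [0,∞) is continuous with g(s) → 0 as s → ∞. If w is bounded, then w(s) → 1/√(2τ) or w converges to some positive limit; in particular w cannot oscillate without a limit, and lim_{s→∞} w(s) exists in (0, ∞). -/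
open Filter Topology

/-- Barrier lemma: if `f a ≤ K` and the derivative of `f` is nonpositive wherever
`f` exceeds `K` (for `s ≥ a`), then `f` stays `≤ K` on `[a, ∞)`. -/
lemma barrier_le (f : ℝ → ℝ) (hf : ContDiff ℝ 1 f) (a K : ℝ) (ha : f a ≤ K)
    (hd : ∀ s, a ≤ s → K < f s → deriv f s ≤ 0) : ∀ b, a ≤ b → f b ≤ K := by
  intro b hb
  by_contra hK
  push_neg at hK
  have hab : a < b := lt_of_le_of_ne hb (by rintro rfl; exact absurd ha (not_le.2 hK))
  set S : Set ℝ := Set.Icc a b ∩ {s | f s ≤ K} with hSdef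
  have hSne : S.Nonempty := ⟨a, ⟨le_rfl, le_of_lt hab⟩, ha⟩
  have hSbdd : BddAbove S := ⟨b, fun s hs => hs.1.2⟩
  have hSclosed : IsClosed S :=
    isClosed_Icc.inter (isClosed_le hf.continuous continuous_const)
  set t := sSup S with ht
  have htS : t ∈ S := hSclosed.csSup_mem hSne hSbdd
  have hta : a ≤ t := htS.1.1
  have htb : t ≤ b := htS.1.2
  have hmono : AntitoneOn f (Set.Icc t b) := by
    apply antitoneOn_of_deriv_nonpos (convex_Icc t b) hf.continuous.continuousOn
    · exact (hf.differentiable one_ne_zero).differentiableOn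
    · intro s hs
      rw [interior_Icc] at hs
      refine hd s (hta.trans hs.1.le) ?_
      by_contra h
      push_neg at h
      exact absurd (le_csSup hSbdd ⟨⟨hta.trans hs.1.le, hs.2.le⟩, h⟩) (not_le.2 hs.1)
  exact absurd ((hmono ⟨le_rfl, htb⟩ ⟨htb, le_rfl⟩ htb).trans htS.2) (not_le.2 hK)

/-- If the derivative of `f` is `≤ -c` on `[a, ∞)`, then `f` decays linearly. -/
lemma decay_le (f : ℝ → ℝ) (hf : ContDiff ℝ 1 f) (a c : ℝ)
    (hd : ∀ s, a ≤ s → deriv f s ≤ -c) : ∀ b, a ≤ b → f b ≤ f a - c * (b - a) := by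
  intro b hb
  have hdiff : Differentiable ℝ f := hf.differentiable one_ne_zero
  have hmono : AntitoneOn (fun s => f s + c * s) (Set.Ici a) := by
    apply antitoneOn_of_deriv_nonpos (convex_Ici a)
    · exact (hf.continuous.add (continuous_const.mul continuous_id)).continuousOn
    · exact (hdiff.add ((differentiable_id.const_mul c))).differentiableOn
    · intro x hx
      rw [interior_Ici] at hx
      have h1 : HasDerivAt (fun s => f s + c * s) (deriv f x + c) x := by
        have := ((hdiff x).hasDerivAt).add ((hasDerivAt_id x).const_mul c)
        have h := this
        simp only [mul_one] at h
        exact h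
      rw [h1.deriv]
      linarith [hd x hx.le]
  have := hmono (Set.self_mem_Ici) hb hb
  simp only at this
  linarith

/-- A bounded positive solution of the differential inequalities
`1/τ - 2w² - g ≤ w' ≤ 1/τ - 2w²` with `g → 0` cannot oscillate without limit:
`w` converges to a positive limit. -/
theorem stmt16 (τ s0 : ℝ) (hτ : 0 < τ)
    (w g : ℝ → ℝ)
    (hw1 : ContDiff ℝ 1 w)
    (hpos : ∀ s, s0 ≤ s → 0 < w s)
    (hg_cont : Continuous g) (hg_nonneg : ∀ s, s0 ≤ s → 0 ≤ g s)
    (hg_lim : Tendsto g atTop (nhds 0))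
    (hineq : ∀ s, s0 ≤ s →
      1 / τ - 2 * w s ^ 2 - g s ≤ deriv w s ∧ deriv w s ≤ 1 / τ - 2 * w s ^ 2)
    (hbdd : ∃ M, ∀ s, s0 ≤ s → w s ≤ M) :
    ∃ L : ℝ, 0 < L ∧ Tendsto w atTop (nhds L) := by
  obtain ⟨M, hM⟩ := hbdd
  set L : ℝ := Real.sqrt (1 / (2 * τ)) with hLdef
  have hτ2 : 0 < 1 / (2 * τ) := by positivity
  have hL : 0 < L := Real.sqrt_pos.2 hτ2
  have hL2 : L ^ 2 = 1 / (2 * τ) := Real.sq_sqrt hτ2.le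
  have h2L : 2 * L ^ 2 = 1 / τ := by rw [hL2]; field_simp
  refine ⟨L, hL, ?_⟩
  rw [Metric.tendsto_atTop]
  intro ε hε
  set δ : ℝ := ε / 2 with hδdef
  have hδ : 0 < δ := by positivity
  -- Step A: w eventually dips below L + δ
  have hstepA : ∃ s1, s0 ≤ s1 ∧ w s1 ≤ L + δ := by
    by_contra h
    push_neg at h
    set c : ℝ := 2 * δ * (2 * L + δ) with hcdef
    have hc : 0 < c := by positivity
    have hd : ∀ s, s0 ≤ s → deriv w s ≤ -c := by
      intro s hs
      have h1 := (hineq s hs).2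
      have h2 := h s hs
      nlinarith [hpos s hs]
    have hws0 : 0 < w s0 := hpos s0 le_rfl
    have hble : s0 ≤ s0 + (w s0 + 1) / c := by
      have : 0 ≤ (w s0 + 1) / c := by positivity
      linarith
    have hdec := decay_le w hw1 s0 c hd (s0 + (w s0 + 1) / c) hble
    have hcb : c * (s0 + (w s0 + 1) / c - s0) = w s0 + 1 := by
      field_simp; ring
    rw [hcb] at hdec
    have := hpos _ hble
    linarith
  obtain ⟨s1, hs1, hws1⟩ := hstepA
  -- Barrier from above: w s ≤ L + δ for all s ≥ s1
  have hupper : ∀ s, s1 ≤ s → w s ≤ L + δ := by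
    refine barrier_le w hw1 s1 (L + δ) hws1 ?_
    intro s hs hws
    have hss0 : s0 ≤ s := hs1.trans hs
    have h1 := (hineq s hss0).2
    nlinarith [hpos s hss0]
  -- Choose N beyond which g < δ * L
  have hgev : ∀ᶠ s in atTop, g s < δ * L :=
    hg_lim.eventually_lt_const (by positivity)
  obtain ⟨N1, hN1⟩ := eventually_atTop.mp hgev
  set N : ℝ := max N1 (max s0 s1) with hNdef
  have hNs0 : s0 ≤ N := le_trans (le_max_left _ _) (le_max_right _ _)
  have hNs1 : s1 ≤ N := le_trans (le_max_right _ _) (le_max_right _ _)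
  have hNN1 : N1 ≤ N := le_max_left _ _
  -- wherever s ≥ N and w s ≤ L - δ, the derivative is at least δL
  have hdlow : ∀ s, N ≤ s → w s ≤ L - δ → δ * L ≤ deriv w s := by
    intro s hs hws
    have hss0 : s0 ≤ s := hNs0.trans hs
    have h1 := (hineq s hss0).1
    have h2 : g s < δ * L := hN1 s (hNN1.trans hs)
    nlinarith [hpos s hss0]
  -- Step A': w eventually rises above L - δ
  have hstepA' : ∃ s3, N ≤ s3 ∧ L - δ ≤ w s3 := by
    by_contra h
    push_neg at h
    have hd : ∀ s, N ≤ s → deriv (fun x => -w x) s ≤ -(δ * L) := by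
      intro s hs
      have h1 := hdlow s hs (h s hs).le
      have h2 : deriv (fun x => -w x) s = -deriv w s := deriv.neg
      rw [h2]
      linarith
    have hδL : 0 < δ * L := by positivity
    have hwN : w N ≤ M := hM N hNs0
    have hble : N ≤ N + (M + 1 - w N) / (δ * L) := by
      have h0 : (0:ℝ) < M + 1 - w N := by linarith
      have : 0 ≤ (M + 1 - w N) / (δ * L) := by positivity
      linarith
    have hdec := decay_le (fun x => -w x) hw1.neg N (δ * L) hd _ hble
    have hcb : (δ * L) * (N + (M + 1 - w N) / (δ * L) - N) = M + 1 - w N := by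
      field_simp; ring
    rw [hcb] at hdec
    have := hM _ (hNs0.trans hble)
    linarith
  obtain ⟨s3, hs3, hws3⟩ := hstepA'
  -- Barrier from below: w s ≥ L - δ for all s ≥ s3
  have hlower : ∀ s, s3 ≤ s → L - δ ≤ w s := by
    have hb := barrier_le (fun x => -w x) hw1.neg s3 (-(L - δ)) (by linarith) ?_
    · intro s hs
      have := hb s hs
      linarith
    · intro s hs hws
      have hws' : w s ≤ L - δ := by linarith
      have h1 := hdlow s (hs3.trans hs) hws'
      rw [show deriv (fun x => -w x) s = -deriv w s from deriv.neg]
      nlinarith [mul_pos hδ hL]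
  refine ⟨s3, fun s hs => ?_⟩
  have h1 := hupper s ((hNs1.trans hs3).trans hs)
  have h2 := hlower s hs
  rw [Real.dist_eq, abs_lt]
  constructor <;> simp only [hδdef] at h1 h2 <;> linarith
end
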